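/- arXiv:1511.00224 — 2 statements merged into one kernel-verified Lean document; each statement's English description precedes it below -/
import Mathlib

section
/- For every integer s ≥ 5, every real γ₁ ≥ 1, and the geometric distribution p_k = θ(1−θ)^k whose parameter θ ∈ (0,1) satisfies θ < 2·cos(2π/5), the identity sequence id(k) = k belongs to D(A^s) and the operator B_s = Σ_{k=0}^{s−1} γ₁^{s−1−k} A^k is not injective: there exists a nonzero v ∈ D(A^{s−1}) ⊆ ℂ^ℕ with B_s v = 0. -/
open scoped BigOperators

noncomputable section

/-- Tail sum `q_l = Σ_{k ≥ l} p_k`. -/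
def qtail (p : ℕ → ℝ) (l : ℕ) : ℝ := ∑' k, p (l + k)

/-- The operator `A` on complex sequences: `(A v)(l) = (1/q_l) Σ_{k=l}^∞ p_k v(k)`. -/
def opA (p : ℕ → ℝ) (v : ℕ → ℂ) : ℕ → ℂ :=
  fun l => (1 / (qtail p l : ℂ)) * ∑' k, (p (l + k) : ℂ) * v (l + k)

/-- Membership in the domain `D(A) = {v : Σ_k p_k |v(k)| < ∞}`. -/
def memDA (p : ℕ → ℝ) (v : ℕ → ℂ) : Prop :=
  Summable fun k => p k * ‖v k‖

/-- Membership in the domain `D(A^m) = {v : A^k v ∈ D(A) for k = 0,…,m-1}`. -/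
def memDAiter (p : ℕ → ℝ) (m : ℕ) (v : ℕ → ℂ) : Prop :=
  ∀ k < m, memDA p ((opA p)^[k] v)

/-- The operator `B_s = Σ_{k=0}^{s-1} γ₁^{s-1-k} A^k`. -/
def opB (p : ℕ → ℝ) (γ₁ : ℝ) (s : ℕ) (v : ℕ → ℂ) : ℕ → ℂ :=
  fun l => ∑ k ∈ Finset.range s, (γ₁ : ℂ) ^ (s - 1 - k) * ((opA p)^[k] v) l

/-!
For the geometric distribution the tail sums defining `A` are geometric series, so `A` maps
`k ↦ z ^ k` (for `‖(1 - θ) z‖ < 1`) to `θ / (1 - (1 - θ) z)` times itself; every `μ` with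
`‖1 - θ / μ‖ < 1` arises as such an eigenvalue. On an eigenvector with eigenvalue `γ₁ ζ`, `B_s`
is multiplication by `γ₁ ^ (s - 1) (1 + ζ + ⋯ + ζ ^ (s - 1))`, which vanishes when `ζ` is a
primitive `s`-th root of unity. For `ζ = e^{2πi/s}` and `r = θ / γ₁` we get
`‖1 - r / ζ‖² = 1 - 2 r cos (2π/s) + r² < 1`, because `r ≤ θ < 2 cos (2π/5) ≤ 2 cos (2π/s)`.
The identity sequence lies in every `D(A^m)` since `A` adds the constant `(1 - θ) / θ` to it.
-/

open Complex

section Eigenvectors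

variable {p : ℕ → ℝ}

lemma opA_smul (c : ℂ) (v : ℕ → ℂ) : opA p (c • v) = c • opA p v := by
  funext l
  simp only [opA, Pi.smul_apply, smul_eq_mul, mul_left_comm _ c, tsum_mul_left]

lemma iterate_opA_of_eq_smul {v : ℕ → ℂ} {μ : ℂ} (h : opA p v = μ • v) (j : ℕ) :
    (opA p)^[j] v = μ ^ j • v := by
  induction j with
  | zero => simp
  | succ j ih => rw [Function.iterate_succ_apply', ih, opA_smul, h, smul_smul, pow_succ]

lemma memDA.smul {v : ℕ → ℂ} (hv : memDA p v) (c : ℂ) : memDA p (c • v) := by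
  simpa only [memDA, Pi.smul_apply, smul_eq_mul, norm_mul, mul_left_comm _ ‖c‖] using
    hv.mul_left ‖c‖

lemma memDAiter_of_eq_smul {v : ℕ → ℂ} {μ : ℂ} (h : opA p v = μ • v) (hv : memDA p v)
    (m : ℕ) : memDAiter p m v := fun j _ => by
  rw [iterate_opA_of_eq_smul h]
  exact hv.smul _

lemma opB_eq_zero_of_eq_smul {v : ℕ → ℂ} {γ₁ : ℝ} {ζ : ℂ} {s : ℕ}
    (h : opA p v = ((γ₁ : ℂ) * ζ) • v) (hζ : IsPrimitiveRoot ζ s) (hs : 1 < s) :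
    opB p γ₁ s v = 0 := by
  funext l
  have hterm : ∀ k ∈ Finset.range s,
      (γ₁ : ℂ) ^ (s - 1 - k) * ((opA p)^[k] v) l = ((γ₁ : ℂ) ^ (s - 1) * v l) * ζ ^ k := by
    intro k hk
    rw [iterate_opA_of_eq_smul h, Pi.smul_apply, smul_eq_mul, mul_pow,
      ← Nat.sub_add_cancel (Nat.le_sub_one_of_lt (Finset.mem_range.mp hk)), pow_add,
      Nat.add_sub_cancel]
    ring
  simp only [opB, Finset.sum_congr rfl hterm, ← Finset.mul_sum, hζ.geom_sum_eq_zero hs,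
    mul_zero, Pi.zero_apply]

end Eigenvectors

section Geometric

variable {θ : ℝ}

lemma qtail_geometric (hθ0 : 0 < θ) (hθ1 : θ < 1) (l : ℕ) :
    qtail (fun k => θ * (1 - θ) ^ k) l = (1 - θ) ^ l := by
  simp only [qtail, pow_add, tsum_mul_left,
    tsum_geometric_of_lt_one (sub_nonneg.2 hθ1.le) (sub_lt_self 1 hθ0), sub_sub_cancel]
  field_simp

lemma norm_one_sub_ofReal (hθ1 : θ < 1) : ‖(1 - θ : ℂ)‖ = 1 - θ := by
  rw [← ofReal_one, ← ofReal_sub, norm_real, Real.norm_of_nonneg (by linarith)]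

lemma one_sub_ofReal_ne_zero (hθ1 : θ < 1) : (1 - θ : ℂ) ≠ 0 := by
  rw [← norm_ne_zero_iff, norm_one_sub_ofReal hθ1]; linarith

lemma opA_geometric_pow (hθ0 : 0 < θ) (hθ1 : θ < 1) {z : ℂ} (hz : ‖(1 - θ : ℂ) * z‖ < 1) :
    opA (fun k => θ * (1 - θ) ^ k) (fun k => z ^ k) =
      (θ / (1 - (1 - θ : ℂ) * z)) • fun k => z ^ k := by
  have hθ' := one_sub_ofReal_ne_zero hθ1
  funext l
  have hterm : ∀ k : ℕ, ((θ * (1 - θ) ^ (l + k) : ℝ) : ℂ) * z ^ (l + k)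
      = (θ * ((1 - θ) * z) ^ l) * ((1 - θ) * z) ^ k := by
    intro k; push_cast; rw [pow_add, mul_pow, mul_pow]; ring
  simp only [opA, qtail_geometric hθ0 hθ1, tsum_congr hterm, tsum_mul_left,
    tsum_geometric_of_norm_lt_one hz, Pi.smul_apply, smul_eq_mul]
  push_cast
  field_simp
  rw [mul_pow, mul_assoc]

lemma memDA_geometric_pow (hθ1 : θ < 1) {z : ℂ} (hz : ‖(1 - θ : ℂ) * z‖ < 1) :
    memDA (fun k => θ * (1 - θ) ^ k) (fun k => z ^ k) := by
  have hterm : ∀ k : ℕ, θ * (1 - θ) ^ k * ‖z ^ k‖ = θ * ‖(1 - θ : ℂ) * z‖ ^ k := by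
    intro k; rw [norm_mul, norm_one_sub_ofReal hθ1, norm_pow, mul_pow, mul_assoc]
  simp only [memDA, hterm]
  exact (summable_geometric_of_lt_one (norm_nonneg _) hz).mul_left θ

/-- The eigenvector is `k ↦ z ^ k` with `(1 - θ) z = 1 - θ / μ`. -/
lemma exists_eigenvector_geometric (hθ0 : 0 < θ) (hθ1 : θ < 1) {μ : ℂ}
    (hμ : ‖1 - θ / μ‖ < 1) :
    ∃ v : ℕ → ℂ, v ≠ 0 ∧ memDA (fun k => θ * (1 - θ) ^ k) v ∧
      opA (fun k => θ * (1 - θ) ^ k) v = μ • v := by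
  have hθ' := one_sub_ofReal_ne_zero hθ1
  have hμ0 : μ ≠ 0 := by rintro rfl; simp at hμ
  set z := (1 - θ / μ) / (1 - θ : ℂ)
  have hz : (1 - θ : ℂ) * z = 1 - θ / μ := mul_div_cancel₀ _ hθ'
  refine ⟨fun k => z ^ k, fun h => by simpa using congrFun h 0,
    memDA_geometric_pow hθ1 (hz ▸ hμ), ?_⟩
  rw [opA_geometric_pow hθ0 hθ1 (hz ▸ hμ), hz, sub_sub_cancel,
    div_div_cancel₀ (by exact_mod_cast hθ0.ne')]

lemma opA_geometric_natCast_add (hθ0 : 0 < θ) (hθ1 : θ < 1) (a : ℂ) :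
    opA (fun k => θ * (1 - θ) ^ k) (fun k => (k : ℂ) + a) =
      fun l : ℕ => (l : ℂ) + (a + (1 - θ) / θ) := by
  have hθ : (θ : ℂ) ≠ 0 := by exact_mod_cast hθ0.ne'
  have hθ' := one_sub_ofReal_ne_zero hθ1
  have hq : ‖(1 - θ : ℂ)‖ < 1 := by rw [norm_one_sub_ofReal hθ1]; linarith
  funext l
  have hterm : ∀ k : ℕ, ((θ * (1 - θ) ^ (l + k) : ℝ) : ℂ) * (((l + k : ℕ) : ℂ) + a)
      = (θ * (1 - θ) ^ l) * (k * (1 - θ) ^ k) + (θ * (1 - θ) ^ l * (l + a)) * (1 - θ) ^ k := by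
    intro k; push_cast; ring
  have hsum₁ : Summable fun k : ℕ => (k : ℂ) * (1 - θ) ^ k := by
    simpa using summable_pow_mul_geometric_of_norm_lt_one 1 hq
  simp only [opA, qtail_geometric hθ0 hθ1, tsum_congr hterm,
    ((hsum₁.mul_left _).tsum_add ((summable_geometric_of_norm_lt_one hq).mul_left _)),
    tsum_mul_left, tsum_coe_mul_geometric_of_norm_lt_one hq, tsum_geometric_of_norm_lt_one hq,
    sub_sub_cancel]
  push_cast
  field_simp
  ring

lemma iterate_opA_geometric_natCast (hθ0 : 0 < θ) (hθ1 : θ < 1) (j : ℕ) :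
    (opA (fun k => θ * (1 - θ) ^ k))^[j] (fun k => (k : ℂ)) =
      fun k : ℕ => (k : ℂ) + j * ((1 - θ) / θ) := by
  induction j with
  | zero => simp
  | succ j ih =>
    rw [Function.iterate_succ_apply', ih, opA_geometric_natCast_add hθ0 hθ1]
    funext k
    push_cast
    ring

lemma memDA_geometric_natCast_add (hθ0 : 0 < θ) (hθ1 : θ < 1) (a : ℂ) :
    memDA (fun k => θ * (1 - θ) ^ k) (fun k => (k : ℂ) + a) := by
  have hq : ‖1 - θ‖ < 1 := by rw [Real.norm_of_nonneg (by linarith)]; linarith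
  have hsum : Summable fun k : ℕ => θ * (k * (1 - θ) ^ k) + θ * ‖a‖ * (1 - θ) ^ k :=
    ((by simpa using summable_pow_mul_geometric_of_norm_lt_one 1 hq :
      Summable fun k : ℕ => (k : ℝ) * (1 - θ) ^ k).mul_left θ).add
      ((summable_geometric_of_norm_lt_one hq).mul_left _)
  refine hsum.of_nonneg_of_le (fun k => by positivity) fun k => ?_
  calc θ * (1 - θ) ^ k * ‖(k : ℂ) + a‖ ≤ θ * (1 - θ) ^ k * (k + ‖a‖) := by
        gcongr; exact (norm_add_le _ _).trans_eq (by rw [norm_natCast])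
    _ = θ * (k * (1 - θ) ^ k) + θ * ‖a‖ * (1 - θ) ^ k := by ring

lemma memDAiter_geometric_natCast (hθ0 : 0 < θ) (hθ1 : θ < 1) (m : ℕ) :
    memDAiter (fun k => θ * (1 - θ) ^ k) m (fun k => (k : ℂ)) := fun j _ => by
  rw [iterate_opA_geometric_natCast hθ0 hθ1]
  exact memDA_geometric_natCast_add hθ0 hθ1 _

end Geometric

lemma norm_one_sub_div_exp_lt_one {r φ : ℝ} (hr0 : 0 < r) (hr : r < 2 * Real.cos φ) :
    ‖1 - r / exp (φ * I)‖ < 1 := by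
  have he : ‖exp (φ * I)‖ = 1 := norm_exp_ofReal_mul_I φ
  rw [one_sub_div (exp_ne_zero _), norm_div, he, div_one, ← sq_lt_one_iff₀ (norm_nonneg _),
    Complex.sq_norm, normSq_apply]
  simp only [sub_re, sub_im, exp_ofReal_mul_I_re, exp_ofReal_mul_I_im, ofReal_re, ofReal_im,
    sub_zero]
  nlinarith [Real.sin_sq_add_cos_sq φ]

/-- For every `s ≥ 5`, `γ₁ ≥ 1` and the geometric distribution with parameter
`θ ∈ (0,1)`, `θ < 2 cos(2π/5)`, the identity sequence is in `D(A^s)` and `B_s` is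
not injective on `D(A^{s-1})`. -/
theorem opB_not_injective_of_five_le
    (θ : ℝ) (hθ : θ ∈ Set.Ioo (0 : ℝ) 1) (hθ5 : θ < 2 * Real.cos (2 * Real.pi / 5))
    (s : ℕ) (hs : 5 ≤ s) (γ₁ : ℝ) (hγ₁ : 1 ≤ γ₁) :
    memDAiter (fun k => θ * (1 - θ) ^ k) s (fun k => (k : ℂ)) ∧
      ∃ v : ℕ → ℂ, v ≠ 0 ∧ memDAiter (fun k => θ * (1 - θ) ^ k) (s - 1) v ∧
        opB (fun k => θ * (1 - θ) ^ k) γ₁ s v = 0 := by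
  obtain ⟨hθ0, hθ1⟩ := hθ
  refine ⟨memDAiter_geometric_natCast hθ0 hθ1 s, ?_⟩
  set φ : ℝ := 2 * Real.pi / s
  have hζ : IsPrimitiveRoot (exp (φ * I)) s := by
    convert isPrimitiveRoot_exp s (by omega) using 2; simp only [φ]; push_cast; ring
  have hcos : Real.cos (2 * Real.pi / 5) ≤ Real.cos φ :=
    Real.cos_le_cos_of_nonneg_of_le_pi (by positivity) (by linarith [Real.pi_pos])
      (div_le_div_of_nonneg_left (by positivity) (by norm_num) (by exact_mod_cast hs))
  have hr : θ / γ₁ < 2 * Real.cos φ :=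
    calc θ / γ₁ ≤ θ := div_le_self hθ0.le hγ₁
      _ < 2 * Real.cos φ := by linarith
  obtain ⟨v, hv0, hv, hAv⟩ := exists_eigenvector_geometric hθ0 hθ1 (μ := γ₁ * exp (φ * I)) (by
    simpa [div_div] using norm_one_sub_div_exp_lt_one (by positivity) hr)
  exact ⟨v, hv0, memDAiter_of_eq_smul hAv hv _, opB_eq_zero_of_eq_smul hAv hζ (by omega)⟩
end
end

section
/- For every probability distribution p = (p_k) on ℕ with p_k > 0 for all k, every real γ₁ > 0 and every s ∈ {2,3,4}, the operator B_s = Σ_{k=0}^{s−1} γ₁^{s−1−k} A^k is injective on real sequences: if v ∈ D(A^{s−1}) ∩ ℝ^ℕ and B_s v = 0, then v = 0. -/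
open scoped BigOperators

noncomputable section

/-- The operator `A` on real sequences: `(A v)(l) = (1/q_l) Σ_{k=l}^∞ p_k v(k)`. -/
def opAR (p : ℕ → ℝ) (v : ℕ → ℝ) : ℕ → ℝ :=
  fun l => (1 / qtail p l) * ∑' k, p (l + k) * v (l + k)

/-- Membership in the domain `D(A) = {v : Σ_k p_k |v(k)| < ∞}` (real sequences). -/
def memDAR (p : ℕ → ℝ) (v : ℕ → ℝ) : Prop :=
  Summable fun k => p k * |v k|

/-- Membership in the domain `D(A^m) = {v : A^k v ∈ D(A) for k = 0,…,m-1}`. -/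
def memDAiterR (p : ℕ → ℝ) (m : ℕ) (v : ℕ → ℝ) : Prop :=
  ∀ k < m, memDAR p ((opAR p)^[k] v)

/-- The operator `B_s = Σ_{k=0}^{s-1} γ₁^{s-1-k} A^k` on real sequences. -/
def opBR (p : ℕ → ℝ) (γ₁ : ℝ) (s : ℕ) (v : ℕ → ℝ) : ℕ → ℝ :=
  fun l => ∑ k ∈ Finset.range s, γ₁ ^ (s - 1 - k) * ((opAR p)^[k] v) l

/-! The nontrivial `s`-th roots of unity `ω` satisfy `Re ω ≤ 0` for `s ≤ 4`, and
`B_s = ∏_{ω ≠ 1} (A - γ₁ ω)`, so it suffices that `A` (extended to complex sequences) has no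
eigenvalue `μ ≠ 0` with `Re μ ≤ 0`. If `A u = μ u`, the tail sums `S_l = Σ_{k ≥ l} p_k u_k` equal
`μ q_l u_l`, and `S_l - S_{l+1} = p_l u_l` turns into `μ t_{l+1} = (μ - p_l / q_l) t_l` for
`t_l = q_l u_l`. As `|μ - r| ≥ |μ|` for `r ≥ 0`, `|t_l|` is nondecreasing, while `t_l = S_l / μ → 0`. -/

open Filter Topology Finset

def opAC (p : ℕ → ℝ) (u : ℕ → ℂ) : ℕ → ℂ :=
  fun l => (qtail p l : ℂ)⁻¹ * ∑' k, (p (l + k) : ℂ) * u (l + k)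

def memDAC (p : ℕ → ℝ) (u : ℕ → ℂ) : Prop :=
  Summable fun k => (p k : ℂ) * u k

section

variable {p : ℕ → ℝ}

lemma summable_tail {α : Type*} [AddCommGroup α] [TopologicalSpace α] [IsTopologicalAddGroup α]
    {f : ℕ → α} (hf : Summable f) (l : ℕ) : Summable fun k => f (l + k) := by
  simpa only [add_comm l] using (summable_nat_add_iff l).2 hf

lemma qtail_pos (hp : ∀ k, 0 < p k) (hps : Summable p) (l : ℕ) : 0 < qtail p l :=
  (summable_tail hps l).tsum_pos (fun _ => (hp _).le) 0 (hp _)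

lemma memDAC.add {u w : ℕ → ℂ} (hu : memDAC p u) (hw : memDAC p w) : memDAC p (u + w) := by
  simpa only [memDAC, Pi.add_apply, mul_add] using Summable.add hu hw

lemma memDAC.const_smul {u : ℕ → ℂ} (hu : memDAC p u) (c : ℂ) : memDAC p (c • u) := by
  simpa only [memDAC, Pi.smul_apply, smul_eq_mul, mul_left_comm] using hu.mul_left c

lemma memDAC_ofReal (hp : ∀ k, 0 ≤ p k) {v : ℕ → ℝ} (hv : memDAR p v) :
    memDAC p fun k => (v k : ℂ) := by
  refine Summable.of_norm (hv.congr fun k => ?_)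
  simp [abs_of_nonneg (hp k)]

lemma opAC_ofReal (v : ℕ → ℝ) : opAC p (fun k => (v k : ℂ)) = fun l => (opAR p v l : ℂ) := by
  ext l
  simp [opAC, opAR, Complex.ofReal_tsum]

lemma iterate_opAC_ofReal (v : ℕ → ℝ) (n : ℕ) :
    (opAC p)^[n] (fun k => (v k : ℂ)) = fun l => ((opAR p)^[n] v l : ℂ) := by
  induction n with
  | zero => rfl
  | succ n ih => rw [Function.iterate_succ_apply', ih, opAC_ofReal, Function.iterate_succ_apply']

lemma opAC_add {u w : ℕ → ℂ} (hu : memDAC p u) (hw : memDAC p w) :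
    opAC p (u + w) = opAC p u + opAC p w := by
  ext l
  simp only [opAC, Pi.add_apply, mul_add, ((summable_tail hu l).tsum_add (summable_tail hw l))]

lemma opAC_const_smul (c : ℂ) (u : ℕ → ℂ) : opAC p (c • u) = c • opAC p u := by
  ext l
  simp only [opAC, Pi.smul_apply, smul_eq_mul, mul_left_comm _ c, tsum_mul_left]

lemma Complex.norm_le_norm_sub_ofReal {μ : ℂ} (hμ : μ.re ≤ 0) {r : ℝ} (hr : 0 ≤ r) :
    ‖μ‖ ≤ ‖μ - r‖ := by
  rw [← sq_le_sq₀ (norm_nonneg _) (norm_nonneg _), Complex.sq_norm, Complex.sq_norm,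
    Complex.normSq_apply, Complex.normSq_apply]
  simp only [Complex.sub_re, Complex.sub_im, Complex.ofReal_re, Complex.ofReal_im, sub_zero]
  nlinarith

lemma eq_zero_of_tendsto_zero_of_mul_succ {μ : ℂ} (hμ : μ ≠ 0) (hre : μ.re ≤ 0)
    {t : ℕ → ℂ} {r : ℕ → ℝ} (hr : ∀ l, 0 ≤ r l) (hrec : ∀ l, μ * t (l + 1) = (μ - r l) * t l)
    (ht : Tendsto t atTop (𝓝 0)) : t = 0 := by
  have hmono : Monotone fun l => ‖t l‖ := by
    refine monotone_nat_of_le_succ fun l => le_of_mul_le_mul_left ?_ (norm_pos_iff.2 hμ)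
    calc ‖μ‖ * ‖t l‖ ≤ ‖μ - r l‖ * ‖t l‖ :=
          mul_le_mul_of_nonneg_right (Complex.norm_le_norm_sub_ofReal hre (hr l)) (norm_nonneg _)
      _ = ‖μ‖ * ‖t (l + 1)‖ := by rw [← norm_mul, ← norm_mul, hrec]
  ext l
  exact norm_le_zero_iff.1 <| ge_of_tendsto (by simpa using ht.norm)
    (eventually_atTop.2 ⟨l, fun m hm => hmono hm⟩)

theorem eq_zero_of_opAC_eq_smul (hp : ∀ k, 0 < p k) (hps : Summable p) {μ : ℂ} (hμ : μ ≠ 0)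
    (hre : μ.re ≤ 0) {u : ℕ → ℂ} (hu : memDAC p u) (h : opAC p u = μ • u) : u = 0 := by
  set S : ℕ → ℂ := fun l => ∑' k, (p (l + k) : ℂ) * u (l + k)
  have hq (l : ℕ) : (qtail p l : ℂ) ≠ 0 := Complex.ofReal_ne_zero.2 (qtail_pos hp hps l).ne'
  have hS (l : ℕ) : S l = μ * (qtail p l * u l) := by
    have := congrFun h l
    simp only [opAC, Pi.smul_apply, smul_eq_mul] at this
    field_simp [hq l] at this
    linear_combination this
  have hS_succ (l : ℕ) : S l = p l * u l + S (l + 1) := by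
    simp only [S, (summable_tail hu l).tsum_eq_zero_add, add_zero, ← add_assoc, add_right_comm l]
  have hS_tendsto : Tendsto S atTop (𝓝 0) := by
    refine (tendsto_sum_nat_add fun k => (p k : ℂ) * u k).congr fun l => ?_
    simp only [S, add_comm]
  have ht : (fun l => (qtail p l : ℂ) * u l) = 0 := by
    refine eq_zero_of_tendsto_zero_of_mul_succ hμ hre
      (fun l => (div_pos (hp l) (qtail_pos hp hps l)).le) (fun l => ?_) ?_
    · have hr : ((p l / qtail p l : ℝ) : ℂ) * (qtail p l * u l) = p l * u l := by
        push_cast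
        field_simp [hq l]
      linear_combination hS l - hS (l + 1) - hS_succ l + hr
    · simpa [hS, hμ] using hS_tendsto.const_mul μ⁻¹
  ext l
  exact (mul_eq_zero.1 (congrFun ht l)).resolve_left (hq l)

theorem eq_zero_of_opAC_quadratic (hp : ∀ k, 0 < p k) (hps : Summable p) {μ ν : ℂ}
    (hμ : μ ≠ 0) (hμre : μ.re ≤ 0) (hν : ν ≠ 0) (hνre : ν.re ≤ 0) {u : ℕ → ℂ}
    (hu : memDAC p u) (hAu : memDAC p (opAC p u))
    (h : opAC p (opAC p u) - (μ + ν) • opAC p u + (μ * ν) • u = 0) : u = 0 := by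
  have hw : opAC p (opAC p u + (-ν) • u) = μ • (opAC p u + (-ν) • u) := by
    rw [opAC_add hAu (hu.const_smul _), opAC_const_smul]
    linear_combination (norm := module) h
  have hAu_eq : opAC p u + (-ν) • u = 0 :=
    eq_zero_of_opAC_eq_smul hp hps hμ hμre (hAu.add (hu.const_smul _)) hw
  refine eq_zero_of_opAC_eq_smul hp hps hν hνre hu ?_
  linear_combination (norm := module) hAu_eq

theorem eq_zero_of_opAC_geom_sum_two (hp : ∀ k, 0 < p k) (hps : Summable p) {γ : ℝ}
    (hγ : 0 < γ) {u : ℕ → ℂ} (hu : memDAC p u)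
    (h : ∑ k ∈ range 2, (γ : ℂ) ^ (2 - 1 - k) • (opAC p)^[k] u = 0) : u = 0 := by
  simp only [sum_range_succ, sum_range_zero, zero_add, Nat.add_one_sub_one, tsub_zero, tsub_self,
    pow_one, pow_zero, Function.iterate_zero, id_eq, Function.iterate_one, one_smul] at h
  refine eq_zero_of_opAC_eq_smul hp hps (μ := -γ) (by simpa using hγ.ne') (by simpa using hγ.le)
    hu ?_
  linear_combination (norm := module) h

theorem eq_zero_of_opAC_geom_sum_three (hp : ∀ k, 0 < p k) (hps : Summable p) {γ : ℝ}
    (hγ : 0 < γ) {u : ℕ → ℂ} (hu : memDAC p u) (hAu : memDAC p (opAC p u))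
    (h : ∑ k ∈ range 3, (γ : ℂ) ^ (3 - 1 - k) • (opAC p)^[k] u = 0) : u = 0 := by
  simp only [sum_range_succ, sum_range_zero, zero_add, Function.iterate_succ_apply',
    Function.iterate_zero_apply] at h
  set μ : ℂ := γ * (-1 / 2 + (√3 / 2 : ℝ) * Complex.I)
  set ν : ℂ := γ * (-1 / 2 - (√3 / 2 : ℝ) * Complex.I)
  have hμ_re : μ.re = -γ / 2 := by simp [μ]; ring
  have hν_re : ν.re = -γ / 2 := by simp [ν]; ring
  have hsum : μ + ν = -γ := by simp only [μ, ν]; ring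
  have hprod : μ * ν = γ ^ 2 := by
    have h3 : ((√3 : ℝ) : ℂ) ^ 2 = 3 := by exact_mod_cast Real.sq_sqrt (by norm_num : (0 : ℝ) ≤ 3)
    simp only [μ, ν]
    push_cast
    linear_combination (-(γ : ℂ) ^ 2 / 4) * (((√3 : ℝ) : ℂ) ^ 2 * Complex.I_sq - h3)
  refine eq_zero_of_opAC_quadratic hp hps (μ := μ) (ν := ν)
    (fun h0 => by simp [h0] at hμ_re; linarith) (by linarith)
    (fun h0 => by simp [h0] at hν_re; linarith) (by linarith) hu hAu ?_
  rw [hsum, hprod]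
  linear_combination (norm := module) h

theorem eq_zero_of_opAC_geom_sum_four (hp : ∀ k, 0 < p k) (hps : Summable p) {γ : ℝ}
    (hγ : 0 < γ) {u : ℕ → ℂ} (hu : memDAC p u) (hAu : memDAC p (opAC p u))
    (hA2u : memDAC p (opAC p (opAC p u)))
    (h : ∑ k ∈ range 4, (γ : ℂ) ^ (4 - 1 - k) • (opAC p)^[k] u = 0) : u = 0 := by
  simp only [sum_range_succ, sum_range_zero, zero_add, Function.iterate_succ_apply',
    Function.iterate_zero_apply] at h
  have hw : opAC p (opAC p u) + (γ : ℂ) ^ 2 • u = 0 := by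
    refine eq_zero_of_opAC_eq_smul hp hps (μ := -γ) (by simpa using hγ.ne') (by simpa using hγ.le)
      (hA2u.add (hu.const_smul _)) ?_
    rw [opAC_add hA2u (hu.const_smul _), opAC_const_smul]
    linear_combination (norm := module) h
  refine eq_zero_of_opAC_quadratic hp hps (μ := γ * Complex.I) (ν := -(γ * Complex.I))
    (by simp [hγ.ne']) (by simp) (by simp [hγ.ne']) (by simp) hu hAu ?_
  have hprod : γ * Complex.I * -(γ * Complex.I) = (γ : ℂ) ^ 2 := by
    linear_combination (-(γ : ℂ) ^ 2) * Complex.I_sq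
  rw [add_neg_cancel, hprod]
  linear_combination (norm := module) hw

end

lemma ofReal_comp_opBR (p : ℕ → ℝ) (γ : ℝ) (s : ℕ) (v : ℕ → ℝ) :
    (fun l => (opBR p γ s v l : ℂ)) =
      ∑ k ∈ range s, (γ : ℂ) ^ (s - 1 - k) • (opAC p)^[k] (fun l => (v l : ℂ)) := by
  ext l
  simp [opBR, iterate_opAC_ofReal, Finset.sum_apply]

/-- For any probability distribution `p` on `ℕ` with all masses positive, any `γ₁ > 0`
and any `s ∈ {2,3,4}`, the operator `B_s` is injective on real sequences in its domain. -/
theorem injective_opB_real_s_two_three_four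
    (p : ℕ → ℝ) (hp : ∀ k, 0 < p k) (hsum : HasSum p 1)
    (γ₁ : ℝ) (hγ₁ : 0 < γ₁) (s : ℕ) (hs : s = 2 ∨ s = 3 ∨ s = 4)
    (v : ℕ → ℝ) (hv : memDAiterR p (s - 1) v) (hBv : opBR p γ₁ s v = 0) :
    v = 0 := by
  have hps : Summable p := hsum.summable
  set u : ℕ → ℂ := fun l => (v l : ℂ)
  have hdom : ∀ k < s - 1, memDAC p ((opAC p)^[k] u) := fun k hk => by
    rw [iterate_opAC_ofReal]
    exact memDAC_ofReal (fun k => (hp k).le) (hv k hk)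
  have hrel : ∑ k ∈ range s, (γ₁ : ℂ) ^ (s - 1 - k) • (opAC p)^[k] u = 0 := by
    rw [← ofReal_comp_opBR, hBv]
    rfl
  suffices u = 0 by simpa [u, funext_iff] using this
  rcases hs with rfl | rfl | rfl
  · exact eq_zero_of_opAC_geom_sum_two hp hps hγ₁ (hdom 0 (by norm_num)) hrel
  · exact eq_zero_of_opAC_geom_sum_three hp hps hγ₁ (hdom 0 (by norm_num)) (hdom 1 (by norm_num))
      hrel
  · exact eq_zero_of_opAC_geom_sum_four hp hps hγ₁ (hdom 0 (by norm_num)) (hdom 1 (by norm_num))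
      (hdom 2 (by norm_num)) hrel
end
end
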